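/- Assume 0 ≤ λ < 1, that there exists T ∈ ℕ with c_τ = 0 for all τ > T and u_τ = 0 for all τ ≥ T. Then for every t ≤ T−1, the infinite-series and the finite-horizon forms of the λ-weighted synthetic gradient coincide: (1−λ) Σ_{n=1}^{∞} λ^{n−1} G_t^{(n)} = (1−λ) Σ_{n=1}^{T−t−1} λ^{n−1} G_t^{(n)} + λ^{T−t−1} G_t, where G_t := Σ_{k=1}^{T−t} γ^{k−1} c_{t+k} P(t+k,t) is the true backpropagated gradient. -/

import Mathlib

open Finset Matrix

noncomputable section

/-- Propagator `Pfrom J a n = P(a+n, a) = J_{a+n-1} ⋯ J_a`. -/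
def Pfrom {d : ℕ} (J : ℕ → Matrix (Fin d) (Fin d) ℝ) (a : ℕ) : ℕ → Matrix (Fin d) (Fin d) ℝ
  | 0 => 1
  | n + 1 => J (a + n) * Pfrom J a n

/-- Propagator `P J b a = P(b, a) = J_{b-1} ⋯ J_a` (for `b ≥ a`). -/
def P {d : ℕ} (J : ℕ → Matrix (Fin d) (Fin d) ℝ) (b a : ℕ) : Matrix (Fin d) (Fin d) ℝ :=
  Pfrom J a (b - a)

/-- The n-step synthetic gradient `G_a^{(n)}`. -/
def Gn {d : ℕ} (γ : ℝ) (J : ℕ → Matrix (Fin d) (Fin d) ℝ) (c u : ℕ → Fin d → ℝ)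
    (a n : ℕ) : Fin d → ℝ :=
  (∑ k ∈ Finset.range n, γ ^ k • Matrix.vecMul (c (a + k + 1)) (P J (a + k + 1) a))
    + γ ^ n • Matrix.vecMul (u (a + n)) (P J (a + n) a)

/-- The interim λ-weighted synthetic gradient `G_a^{λ|H}`. -/
def GLam {d : ℕ} (γ lam : ℝ) (J : ℕ → Matrix (Fin d) (Fin d) ℝ) (c u : ℕ → Fin d → ℝ)
    (a H : ℕ) : Fin d → ℝ :=
  (1 - lam) • (∑ n ∈ Finset.range (H - a - 1), lam ^ n • Gn γ J c u a (n + 1))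
    + lam ^ (H - a - 1) • Gn γ J c u a (H - a)

/-- The modified temporal-difference error `δ'_{a,t}`. -/
def δ' {d : ℕ} (γ : ℝ) (J : ℕ → Matrix (Fin d) (Fin d) ℝ) (c u : ℕ → Fin d → ℝ)
    (a t : ℕ) : Fin d → ℝ :=
  Matrix.vecMul (c (t + 1) + γ • u (t + 1)) (P J (t + 1) a) - Matrix.vecMul (u t) (P J t a)

/-- The temporal-difference error `δ_t`. -/
def δtd {d : ℕ} (γ : ℝ) (J : ℕ → Matrix (Fin d) (Fin d) ℝ) (c u w : ℕ → Fin d → ℝ)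
    (t : ℕ) : Fin d → ℝ :=
  Matrix.vecMul (c (t + 1) + γ • u (t + 1)) (P J (t + 1) t) - w t

/-- `δ_{a,t} = δ_t P(t,a)`. -/
def δab {d : ℕ} (γ : ℝ) (J : ℕ → Matrix (Fin d) (Fin d) ℝ) (c u w : ℕ → Fin d → ℝ)
    (a t : ℕ) : Fin d → ℝ :=
  Matrix.vecMul (δtd γ J c u w t) (P J t a)

/-!
Once the synthesiser output has been switched off (`u_τ = 0` for `τ ≥ T`) and no further losses
arrive (`c_τ = 0` for `τ > T`), every `n`-step synthetic gradient with `t + n ≥ T` equals the true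
backpropagated gradient `G_t`. The λ-series is therefore a finite sum plus the geometric tail
`Σ_{n ≥ N} λⁿ G_t = (1 - λ)⁻¹ λᴺ G_t`, and the factor `1 - λ` cancels the `(1 - λ)⁻¹`.
-/

section GeometricTail

variable {E : Type*} [AddCommGroup E] [Module ℝ E] [TopologicalSpace E]
  [IsTopologicalAddGroup E] [ContinuousSMul ℝ E]

theorem hasSum_geometric_smul_of_eventually_eq {lam : ℝ} (hlam0 : 0 ≤ lam) (hlam1 : lam < 1)
    {f : ℕ → E} {v : E} {N : ℕ} (hf : ∀ n, N ≤ n → f n = v) :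
    HasSum (fun n ↦ lam ^ n • f n)
      (∑ n ∈ range N, lam ^ n • f n + (1 - lam)⁻¹ • lam ^ N • v) := by
  have htail : (fun n ↦ lam ^ (n + N) • f (n + N)) = fun n ↦ lam ^ n • lam ^ N • v := by
    funext n
    rw [hf _ (Nat.le_add_left N n), pow_add, mul_smul]
  rw [← hasSum_nat_add_iff' N, add_sub_cancel_left, htail]
  exact (hasSum_geometric_of_lt_one hlam0 hlam1).smul_const _

theorem one_sub_smul_tsum_geometric_smul_of_eventually_eq [T2Space E] {lam : ℝ}
    (hlam0 : 0 ≤ lam) (hlam1 : lam < 1) {f : ℕ → E} {v : E} {N : ℕ}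
    (hf : ∀ n, N ≤ n → f n = v) :
    (1 - lam) • ∑' n, lam ^ n • f n
      = (1 - lam) • ∑ n ∈ range N, lam ^ n • f n + lam ^ N • v := by
  rw [(hasSum_geometric_smul_of_eventually_eq hlam0 hlam1 hf).tsum_eq, smul_add, smul_smul,
    mul_inv_cancel₀ (sub_ne_zero.mpr hlam1.ne'), one_smul]

end GeometricTail

theorem Gn_eq_sum_of_horizon_le {d : ℕ} (γ : ℝ) (J : ℕ → Matrix (Fin d) (Fin d) ℝ)
    {c u : ℕ → Fin d → ℝ} {T a n : ℕ} (hc : ∀ τ, T < τ → c τ = 0)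
    (hu : ∀ τ, T ≤ τ → u τ = 0) (hn : T ≤ a + n) :
    Gn γ J c u a n
      = ∑ k ∈ range (T - a), γ ^ k • vecMul (c (a + k + 1)) (P J (a + k + 1) a) := by
  rw [Gn, hu _ hn, zero_vecMul, smul_zero, add_zero]
  refine (sum_subset (range_subset_range.2 (by omega)) fun k _ hk ↦ ?_).symm
  rw [hc _ (by simp only [mem_range] at hk; omega), zero_vecMul, smul_zero]

theorem lambda_SG_infinite_eq_finite_horizon_general {d : ℕ} (γ lam : ℝ)
    (hlam0 : 0 ≤ lam) (hlam1 : lam < 1)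
    (J : ℕ → Matrix (Fin d) (Fin d) ℝ) (c u : ℕ → Fin d → ℝ)
    (T : ℕ) (hc : ∀ τ, T < τ → c τ = 0) (hu : ∀ τ, T ≤ τ → u τ = 0)
    (t : ℕ) :
    (1 - lam) • ∑' n : ℕ, lam ^ n • Gn γ J c u t (n + 1)
      = (1 - lam) • (∑ n ∈ Finset.range (T - t - 1), lam ^ n • Gn γ J c u t (n + 1))
        + lam ^ (T - t - 1) •
            ∑ k ∈ Finset.range (T - t), γ ^ k • Matrix.vecMul (c (t + k + 1)) (P J (t + k + 1) t) := by
  refine one_sub_smul_tsum_geometric_smul_of_eventually_eq hlam0 hlam1 fun n hn ↦ ?_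
  exact Gn_eq_sum_of_horizon_le γ J hc hu (by omega)

/-- assuming `0 ≤ λ < 1`, `c_τ = 0` for all `τ > T` and `u_τ = 0`
for all `τ ≥ T`, for every `t ≤ T−1` the infinite-series and finite-horizon
forms of the λ-weighted synthetic gradient coincide:
`(1−λ) Σ_{n=1}^∞ λ^{n−1} G_t^{(n)} = (1−λ) Σ_{n=1}^{T−t−1} λ^{n−1} G_t^{(n)} + λ^{T−t−1} G_t`,
where `G_t = Σ_{k=1}^{T−t} γ^{k−1} c_{t+k} P(t+k,t)` is the true backpropagated gradient. -/
theorem lambda_SG_infinite_eq_finite_horizon {d : ℕ} (γ lam : ℝ)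
    (hlam0 : 0 ≤ lam) (hlam1 : lam < 1)
    (J : ℕ → Matrix (Fin d) (Fin d) ℝ) (c u : ℕ → Fin d → ℝ)
    (T : ℕ) (hc : ∀ τ, T < τ → c τ = 0) (hu : ∀ τ, T ≤ τ → u τ = 0)
    (t : ℕ) (ht : t + 1 ≤ T) :
    (1 - lam) • ∑' n : ℕ, lam ^ n • Gn γ J c u t (n + 1)
      = (1 - lam) • (∑ n ∈ Finset.range (T - t - 1), lam ^ n • Gn γ J c u t (n + 1))
        + lam ^ (T - t - 1) •
            ∑ k ∈ Finset.range (T - t), γ ^ k • Matrix.vecMul (c (t + k + 1)) (P J (t + k + 1) t) :=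
  lambda_SG_infinite_eq_finite_horizon_general γ lam hlam0 hlam1 J c u T hc hu t

end
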